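/- arXiv:0802.1706 — 6 statements merged into one kernel-verified Lean document; each statement's English description precedes it below -/
import Mathlib

section
/- Let z, w ∈ ℂ with |z| = 1 and |w| < 1. Then z·A(z,w) − conj(z)·B(z,w) = 0. (Equivalently, the pullback of the propagator 1-form ω(·,w) along the inclusion of the boundary circle into the closed unit disk vanishes, which is property (i) of the propagator: j*ω = 0 for the inclusion j of ∂D̄ × D̄ into D̄ × D̄ in the first variable.) -/
/-!
Complex conjugation exchanges the two coefficients, `conj z * B = -conj (z * A)`, so the
pullback is `2 Re (z * A)`. On the unit circle `conj z = z⁻¹`, and `z * A` collapses to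
`v - conj v` with `v = (1 - conj z * w)⁻¹`, which is purely imaginary.
-/

open Complex

/-- `A z w` is `4πi` times the coefficient of `dz` in the propagator 1-form `ω(z,w)`. -/
noncomputable def propA (z w : ℂ) : ℂ :=
  (z - w)⁻¹ - (starRingEnd ℂ) w / (1 - z * (starRingEnd ℂ) w) - (starRingEnd ℂ) z

/-- `B z w` is `4πi` times the coefficient of `dz̄` in the propagator 1-form `ω(z,w)`. -/
noncomputable def propB (z w : ℂ) : ℂ :=
  -((starRingEnd ℂ) z - (starRingEnd ℂ) w)⁻¹ + w / (1 - (starRingEnd ℂ) z * w) + z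

open ComplexConjugate

theorem conj_mul_propB (z w : ℂ) : conj z * propB z w = -conj (z * propA z w) := by
  simp only [propA, propB, map_mul, map_sub, map_div₀, map_inv₀, map_one, conj_conj]
  ring

theorem mul_propA_of_norm_eq_one {z w : ℂ} (hz : ‖z‖ = 1) (hzw : z ≠ w) :
    z * propA z w = (1 - conj z * w)⁻¹ - conj (1 - conj z * w)⁻¹ := by
  have hz0 : z ≠ 0 := norm_ne_zero_iff.mp (by simp [hz])
  have hsub : z - w ≠ 0 := sub_ne_zero.mpr hzw
  have hsub' : 1 - z * conj w ≠ 0 := by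
    have : 1 - z * conj w = z * conj (z - w) := by
      rw [map_sub, mul_sub, ← inv_eq_conj hz, mul_inv_cancel₀ hz0]
    rw [this]
    exact mul_ne_zero hz0 ((map_ne_zero _).mpr hsub)
  simp only [propA, map_inv₀, map_sub, map_one, map_mul, ← inv_eq_conj hz]
  field_simp
  ring

/-- Boundary condition (property (i)) of the propagator: the pullback of `ω(·,w)` to the
boundary circle in the first variable vanishes. -/
theorem propagator_boundary_vanishing (z w : ℂ) (hz : ‖z‖ = 1) (hw : ‖w‖ < 1) :
    z * propA z w - (starRingEnd ℂ) z * propB z w = 0 := by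
  have hzw : z ≠ w := by rintro rfl; exact hw.ne hz
  rw [conj_mul_propB, sub_neg_eq_add, mul_propA_of_norm_eq_one hz hzw, map_sub, conj_conj]
  ring
end

section
/- Let z, w ∈ ℂ with |z| ≤ 1, |w| ≤ 1 and z ≠ w. Then z·A(z,w) − conj(z)·B(z,w) + w·C(z,w) − conj(w)·D(z,w) = 2·(1 − |z|²). (This is the scalar part of the identity d_{S¹}ω = −p₁*φ for the propagator: the contraction of ω with the vector field generating simultaneous rotation of both points at unit angular speed equals (1/(2π))·(1 − |z|²), the coefficient of u in the equivariant form φ(z,u) = (i/2π) dz∧dz̄ + u(1−|z|²) after rescaling the circle to have period 1.) -/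
open Complex

/-- `C z w` is `4πi` times the coefficient of `dw` in the propagator 1-form `ω(z,w)`. -/
noncomputable def propC (z w : ℂ) : ℂ :=
  -(z - w)⁻¹ + (starRingEnd ℂ) z / (1 - (starRingEnd ℂ) z * w)

/-- `D z w` is `4πi` times the coefficient of `dw̄` in the propagator 1-form `ω(z,w)`. -/
noncomputable def propD (z w : ℂ) : ℂ :=
  ((starRingEnd ℂ) z - (starRingEnd ℂ) w)⁻¹ - z / (1 - z * (starRingEnd ℂ) w)

/-- The scalar part of the identity `d_{S¹} ω = -p₁* φ`: the contraction of the propagator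
with the generator of simultaneous rotations equals `2(1 - |z|²)`. -/
theorem propagator_equivariant_identity (z w : ℂ) (hz : ‖z‖ ≤ 1) (hw : ‖w‖ ≤ 1)
    (hzw : z ≠ w) :
    z * propA z w - (starRingEnd ℂ) z * propB z w + w * propC z w
      - (starRingEnd ℂ) w * propD z w = 2 * (1 - (‖z‖ : ℂ) ^ 2) := by
  have h1 : z - w ≠ 0 := sub_ne_zero.mpr hzw
  have h2 : (starRingEnd ℂ) z - (starRingEnd ℂ) w ≠ 0 := by
    intro h
    exact hzw (by simpa using congrArg (starRingEnd ℂ) (sub_eq_zero.mp h))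
  have e1 : (z - w) * (z - w)⁻¹ = 1 := mul_inv_cancel₀ h1
  have e2 : ((starRingEnd ℂ) z - (starRingEnd ℂ) w) * ((starRingEnd ℂ) z - (starRingEnd ℂ) w)⁻¹ = 1 :=
    mul_inv_cancel₀ h2
  have hzz : z * (starRingEnd ℂ) z = (‖z‖ : ℂ) ^ 2 := Complex.mul_conj' z
  unfold propA propB propC propD
  linear_combination e1 + e2 - 2 * hzz
end

section
/- Let z₀ ∈ ℂ with |z₀| = 1, and let x, y ∈ ℂ with Im(x) > 0, Im(y) > 0 and x ≠ y. Then as t → 0⁺ (t real, t > 0), the limit of i·t·z₀·e^{itx}·A(z₀·e^{itx}, z₀·e^{ity}) exists and equals 1/(x−y) + 1/(x − conj(y)). (This is the dx-coefficient statement of the property that the pullback of the propagator under the maps φ_t(x) = z₀e^{itx} converges, as t → 0, to the Kontsevich propagator ω_K(x,y) = (2π)^{-1}(d arg(x−y) − d arg(conj(x)−y)) on the upper half-plane; the factor 1/(4πi) common to both sides has been dropped.) -/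
/-!
Write `z = z₀ e^{itx}`, `w = z₀ e^{ity}`. Since `conj z₀ = z₀⁻¹`, the factor `z₀` cancels and
`z · conj w = e^{it(x - ȳ)}`, so `i t z A(z, w)` splits into two difference quotients of the form
`i t e^{ita} / (e^{ita} - e^{itb})`, with `(a, b) = (x, y)` and `(x - ȳ, 0)`, minus `i t |z|² → 0`.
Each quotient tends to `i / (i (a - b)) = 1 / (a - b)` by the derivative of `t ↦ e^{ita} - e^{itb}`
at `0`; here `x ≠ ȳ` because `Im x, Im y > 0`.
-/

open Complex Filter

open scoped ComplexConjugate Topology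

lemma hasDerivAt_exp_I_mul_ofReal_mul (a : ℂ) (t : ℝ) :
    HasDerivAt (fun s : ℝ => exp (I * s * a)) (I * a * exp (I * t * a)) t := by
  have h := ((hasDerivAt_id (t : ℂ)).const_mul I).mul_const a |>.cexp
  simpa [mul_comm] using h.comp_ofReal

lemma tendsto_mul_exp_div_exp_sub_exp {a b : ℂ} (hab : a ≠ b) :
    Tendsto (fun t : ℝ => I * t * exp (I * t * a) / (exp (I * t * a) - exp (I * t * b)))
      (𝓝[≠] 0) (𝓝 (1 / (a - b))) := by
  have hslope : Tendsto (fun t : ℝ => (t : ℂ)⁻¹ * (exp (I * t * a) - exp (I * t * b)))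
      (𝓝[≠] 0) (𝓝 (I * (a - b))) := by
    have h := ((hasDerivAt_exp_I_mul_ofReal_mul a 0).sub
      (hasDerivAt_exp_I_mul_ofReal_mul b 0)).tendsto_slope_zero
    simpa [Complex.real_smul, mul_sub] using h
  have hI : Tendsto (fun t : ℝ => I * exp (I * t * a)) (𝓝[≠] 0) (𝓝 I) := by
    have : Continuous fun t : ℝ => I * exp (I * t * a) := by fun_prop
    simpa using (this.tendsto 0).mono_left nhdsWithin_le_nhds
  have hlim := hI.mul (hslope.inv₀ (mul_ne_zero I_ne_zero (sub_ne_zero.mpr hab)))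
  convert hlim using 1
  · ext t
    rw [mul_inv, inv_inv]
    ring
  · rw [mul_inv, ← mul_assoc, mul_inv_cancel₀ I_ne_zero, one_div, one_mul]

lemma exp_I_mul_ofReal_mul_conj (t : ℝ) (x y : ℂ) :
    exp (I * t * x) * conj (exp (I * t * y)) = exp (I * t * (x - conj y)) := by
  rw [← exp_conj, ← exp_add]
  congr 1
  simp only [map_mul, conj_I, conj_ofReal]
  ring

lemma mul_propA_exp_eq {z₀ : ℂ} (hz₀ : ‖z₀‖ = 1) (t : ℝ) (x y : ℂ) :
    I * t * z₀ * exp (I * t * x) * propA (z₀ * exp (I * t * x)) (z₀ * exp (I * t * y)) =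
      I * t * exp (I * t * x) / (exp (I * t * x) - exp (I * t * y)) +
        I * t * exp (I * t * (x - conj y)) / (exp (I * t * (x - conj y)) - exp (I * t * 0)) -
        I * t * (z₀ * exp (I * t * x) * conj (z₀ * exp (I * t * x))) := by
  have hz₀_ne : z₀ ≠ 0 := norm_ne_zero_iff.mp (by simp [hz₀])
  have hunit : z₀ * conj z₀ = 1 := by simp [mul_conj', hz₀]
  have hprod :
      z₀ * exp (I * t * x) * conj (z₀ * exp (I * t * y)) = exp (I * t * (x - conj y)) := by
    rw [map_mul, ← exp_I_mul_ofReal_mul_conj, mul_mul_mul_comm, hunit, one_mul]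
  have hexp : z₀ * exp (I * t * x) / (z₀ * exp (I * t * x) - z₀ * exp (I * t * y)) =
      exp (I * t * x) / (exp (I * t * x) - exp (I * t * y)) := by
    rw [← mul_sub, mul_div_mul_left _ _ hz₀_ne]
  calc _ = I * t * (z₀ * exp (I * t * x) / (z₀ * exp (I * t * x) - z₀ * exp (I * t * y))) -
        I * t * (z₀ * exp (I * t * x) * conj (z₀ * exp (I * t * y))) /
          (1 - z₀ * exp (I * t * x) * conj (z₀ * exp (I * t * y))) -
        I * t * (z₀ * exp (I * t * x) * conj (z₀ * exp (I * t * x))) := by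
        rw [propA]; ring
    _ = _ := by
        rw [hexp, hprod, mul_zero, exp_zero, ← neg_sub (1 : ℂ), div_neg]
        ring

/-- As `t → 0⁺`, the pullback of the propagator under `φ_t(x) = z₀ e^{itx}` converges to the
Kontsevich propagator on the upper half-plane: `dx`-coefficient statement. -/
theorem propagator_limit_kontsevich_dx (z₀ x y : ℂ) (hz₀ : ‖z₀‖ = 1)
    (hx : 0 < x.im) (hy : 0 < y.im) (hxy : x ≠ y) :
    Tendsto
      (fun t : ℝ =>
        Complex.I * (t : ℂ) * z₀ * Complex.exp (Complex.I * (t : ℂ) * x) *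
          propA (z₀ * Complex.exp (Complex.I * (t : ℂ) * x))
            (z₀ * Complex.exp (Complex.I * (t : ℂ) * y)))
      (nhdsWithin 0 (Set.Ioi 0))
      (nhds (1 / (x - y) + 1 / (x - (starRingEnd ℂ) y))) := by
  have hxy_conj : x - conj y ≠ 0 := by
    intro h
    have := congrArg im h
    simp only [sub_im, conj_im, sub_neg_eq_add, zero_im] at this
    linarith
  have hdiag : Tendsto (fun t : ℝ => I * t * (z₀ * exp (I * t * x) * conj (z₀ * exp (I * t * x))))
      (𝓝[≠] 0) (𝓝 0) := by
    have : Continuous fun t : ℝ =>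
        I * t * (z₀ * exp (I * t * x) * conj (z₀ * exp (I * t * x))) := by fun_prop
    simpa using (this.tendsto 0).mono_left nhdsWithin_le_nhds
  have hlim := ((tendsto_mul_exp_div_exp_sub_exp hxy).add
    (tendsto_mul_exp_div_exp_sub_exp hxy_conj)).sub hdiag
  simp only [sub_zero] at hlim
  simpa only [mul_propA_exp_eq hz₀] using hlim.mono_left (nhdsGT_le_nhdsNE 0)
end

section
/- Let z₀ ∈ ℂ with |z₀| = 1, and let x, y ∈ ℂ with Im(x) > 0, Im(y) > 0 and x ≠ y. Then as t → 0⁺ (t real, t > 0), the limit of i·t·z₀·e^{ity}·C(z₀·e^{itx}, z₀·e^{ity}) exists and equals −1/(x−y) + 1/(conj(x) − y). (This is the dy-coefficient statement of the property that the pullback of the propagator under the maps φ_t(x) = z₀e^{itx} converges, as t → 0, to the Kontsevich propagator ω_K(x,y) = (2π)^{-1}(d arg(x−y) − d arg(conj(x)−y)) on the upper half-plane; the factor 1/(4πi) common to both sides has been dropped.) -/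
open Complex Filter

/-! Writing `u = e^{itx}`, `v = e^{ity}`, the rotation `z₀` drops out of `w · C(z, w)`, and
`t v · C(u, v) = -t v / (u - v) + t ū v / (1 - ū v)` with `ū v = e^{it(y - x̄)}`.
Both terms have the shape `t e^{itb} / (e^{ita} - e^{itb}) → 1 / (i (a - b))`, a difference
quotient of `exp` at `0`; the second one has `a = 0`, `b = y - x̄ ≠ 0` because `x` and `y` lie
in the upper half-plane. -/

open Topology

theorem mul_propC_mul_left {z₀ : ℂ} (hz₀ : ‖z₀‖ = 1) (z w : ℂ) :
    z₀ * w * propC (z₀ * z) (z₀ * w) = w * propC z w := by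
  have hconj : (starRingEnd ℂ) z₀ * z₀ = 1 := by
    rw [← inv_eq_conj hz₀, inv_mul_cancel₀ (norm_ne_zero_iff.mp (by simp [hz₀]))]
  have hden : 1 - (starRingEnd ℂ) (z₀ * z) * (z₀ * w) = 1 - (starRingEnd ℂ) z * w := by
    rw [map_mul]
    linear_combination (-(starRingEnd ℂ) z * w) * hconj
  rw [propC, propC, hden, ← mul_sub, mul_inv, inv_eq_conj hz₀, map_mul]
  linear_combination (w * (starRingEnd ℂ) z / (1 - (starRingEnd ℂ) z * w)
    - w * (z - w)⁻¹) * hconj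

theorem conj_cexp_mul_cexp (t : ℝ) (x y : ℂ) :
    (starRingEnd ℂ) (exp (I * t * x)) * exp (I * t * y) =
      exp (I * t * (y - (starRingEnd ℂ) x)) := by
  rw [← exp_conj, ← exp_add]
  congr 1
  simp only [map_mul, conj_I, conj_ofReal]
  ring

theorem tendsto_cexp_sub_cexp_div (a b : ℂ) :
    Tendsto (fun t : ℝ => (exp (I * t * a) - exp (I * t * b)) / t) (𝓝[≠] 0)
      (𝓝 (I * a - I * b)) := by
  have hexp (c : ℂ) : HasDerivAt (fun t : ℝ => exp (I * t * c)) (I * c) 0 := by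
    simpa using ((ofRealCLM.hasDerivAt (x := 0)).const_mul I).mul_const c |>.cexp
  refine (hasDerivAt_iff_tendsto_slope.mp ((hexp a).sub (hexp b))).congr fun t => ?_
  simp [slope, real_smul, div_eq_inv_mul]

theorem tendsto_mul_cexp_div_cexp_sub_cexp {a b : ℂ} (hab : a ≠ b) :
    Tendsto (fun t : ℝ => t * exp (I * t * b) / (exp (I * t * a) - exp (I * t * b))) (𝓝[≠] 0)
      (𝓝 (I * (a - b))⁻¹) := by
  have hexp : Tendsto (fun t : ℝ => exp (I * t * b)) (𝓝[≠] 0) (𝓝 1) := by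
    simpa using ((by fun_prop : Continuous fun t : ℝ => exp (I * t * b)).tendsto 0).mono_left
      nhdsWithin_le_nhds
  have hne : I * a - I * b ≠ 0 := by
    rw [← mul_sub]; exact mul_ne_zero I_ne_zero (sub_ne_zero.mpr hab)
  convert hexp.div (tendsto_cexp_sub_cexp_div a b) hne using 1
  · ext t
    rw [Pi.div_apply, div_div_eq_mul_div, mul_comm]
  · rw [mul_sub, one_div]

/-- As `t → 0⁺`, the pullback of the propagator under `φ_t(x) = z₀ e^{itx}` converges to the
Kontsevich propagator on the upper half-plane: `dy`-coefficient statement. -/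
theorem propagator_limit_kontsevich_dy (z₀ x y : ℂ) (hz₀ : ‖z₀‖ = 1)
    (hx : 0 < x.im) (hy : 0 < y.im) (hxy : x ≠ y) :
    Tendsto
      (fun t : ℝ =>
        Complex.I * (t : ℂ) * z₀ * Complex.exp (Complex.I * (t : ℂ) * y) *
          propC (z₀ * Complex.exp (Complex.I * (t : ℂ) * x))
            (z₀ * Complex.exp (Complex.I * (t : ℂ) * y)))
      (nhdsWithin 0 (Set.Ioi 0))
      (nhds (-(1 / (x - y)) + 1 / ((starRingEnd ℂ) x - y))) := by
  set c := y - (starRingEnd ℂ) x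
  have hc : (0 : ℂ) ≠ c := fun h => by
    have := congrArg Complex.im h
    simp only [c, zero_im, sub_im, conj_im] at this
    linarith
  have hdecomp : ∀ t : ℝ, I * t * z₀ * exp (I * t * y) *
      propC (z₀ * exp (I * t * x)) (z₀ * exp (I * t * y)) =
      -I * (t * exp (I * t * y) / (exp (I * t * x) - exp (I * t * y)))
        + I * (t * exp (I * t * c) / (exp (I * t * 0) - exp (I * t * c))) := fun t => by
    rw [mul_assoc _ z₀, mul_assoc, mul_propC_mul_left hz₀, propC, ← conj_cexp_mul_cexp,
      mul_zero, exp_zero]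
    ring
  simp_rw [hdecomp]
  convert (((tendsto_mul_cexp_div_cexp_sub_cexp hxy).const_mul (-I)).add
    ((tendsto_mul_cexp_div_cexp_sub_cexp hc).const_mul I)).mono_left (nhdsGT_le_nhdsNE 0) using 2
  simp only [c, zero_sub, neg_sub, mul_inv, ← mul_assoc, neg_mul, mul_inv_cancel₀ I_ne_zero,
    one_mul, one_div]
end

section
/- Let z ∈ ℂ with |z| < 1. Then ∫₀^{2π} g_z(θ) dθ = 1, where g_z(θ) = (1/(4π))·(e^{iθ}·C(z, e^{iθ}) − e^{−iθ}·D(z, e^{iθ})). In particular the boundary integral of the propagator, ∫_{∂D̄} ω(z,·), is independent of the interior point z and equals 1. -/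
open Complex MeasureTheory intervalIntegral

/-- `g z θ` is the coefficient of `dθ` in the pullback of `ω(z,·)` to the boundary circle
parametrized by `w = e^{iθ}`. -/
noncomputable def gProp (z : ℂ) (θ : ℝ) : ℂ :=
  (1 / (4 * (Real.pi : ℂ))) *
    (Complex.exp (Complex.I * θ) * propC z (Complex.exp (Complex.I * θ)) -
      Complex.exp (-(Complex.I * θ)) * propD z (Complex.exp (Complex.I * θ)))

/-!
On the unit circle `w̄ = w⁻¹`, so `w C(z,w) - w̄ D(z,w) = K + K̄` with `K = (w + z)/(w - z)` the
Herglotz–Riesz kernel. Hence `g_z(θ) = P(z, e^{iθ}) / 2π`, where `P = Re K` is the Poisson kernel of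
the unit disk, and the claim is the Poisson integral formula for the constant function `1`.
-/

open ComplexConjugate Real

theorem mul_propC_sub_conj_mul_propD {z w : ℂ} (hw : ‖w‖ = 1) (hzw : z ≠ w) :
    w * propC z w - conj w * propD z w = 2 * poissonKernel 0 z w := by
  set K := herglotzRieszKernel 0 z w
  have hw0 : w ≠ 0 := by rintro rfl; simp at hw
  have hconj_mul : conj w * w = 1 := by
    rw [← normSq_eq_conj_mul_self, normSq_eq_norm_sq, hw]; norm_num
  have h₁ : 1 - conj z * w = w * (conj w - conj z) := by linear_combination -hconj_mul
  have h₂ : 1 - z * conj w = conj w * (w - z) := by linear_combination -hconj_mul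
  have hsub : z - w ≠ 0 := sub_ne_zero.2 hzw
  have hsub' : w - z ≠ 0 := sub_ne_zero.2 hzw.symm
  have hsub_conj : conj z - conj w ≠ 0 := by rw [← map_sub]; exact (map_ne_zero _).2 hsub
  have hsub_conj' : conj w - conj z ≠ 0 := by rw [← map_sub]; exact (map_ne_zero _).2 hsub'
  have hw0_conj : conj w ≠ 0 := (map_ne_zero _).2 hw0
  calc w * propC z w - conj w * propD z w = K + conj K := by
        simp only [K, propC, propD, herglotzRieszKernel, h₁, h₂, sub_zero, map_div₀, map_add,
          map_sub]
        field_simp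
        ring
    _ = 2 * poissonKernel 0 z w := by
        rw [add_conj, poissonKernel_eq_re_herglotzRieszKernel]
        push_cast
        rfl

theorem gProp_eq_poissonKernel {z : ℂ} (hz : ‖z‖ < 1) (θ : ℝ) :
    gProp z θ = (2 * π)⁻¹ * poissonKernel 0 z (circleMap 0 1 θ) := by
  have hcirc : circleMap 0 1 θ = exp (I * θ) := by simp [circleMap, mul_comm]
  have hconj : conj (exp (I * θ)) = exp (-(I * θ)) := by rw [← exp_conj]; simp
  have hnorm : ‖exp (I * θ)‖ = 1 := by rw [← hcirc]; simp
  have hzw : z ≠ exp (I * θ) := by rintro rfl; linarith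
  rw [gProp, ← hconj, mul_propC_sub_conj_mul_propD hnorm hzw, hcirc]
  push_cast
  field_simp
  ring

/-- The boundary integral of the propagator `∫_{∂D̄} ω(z,·)` equals `1` for any interior
point `z`. -/
theorem propagator_boundary_integral_eq_one (z : ℂ) (hz : ‖z‖ < 1) :
    ∫ θ in (0 : ℝ)..(2 * Real.pi), gProp z θ = 1 := by
  calc ∫ θ in (0 : ℝ)..(2 * π), gProp z θ
      = (2 * π)⁻¹ •
          ∫ θ in (0 : ℝ)..(2 * π), (poissonKernel 0 z • 1 : ℂ → ℂ) (circleMap 0 1 θ) := by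
        rw [← intervalIntegral.integral_smul]
        refine integral_congr fun θ _ => ?_
        simp [gProp_eq_poissonKernel hz, real_smul]
    _ = circleAverage (poissonKernel 0 z • 1 : ℂ → ℂ) 0 1 := rfl
    _ = 1 := diffContOnCl_const.circleAverage_poissonKernel_smul (by simpa using hz)
end

section
/- Let z ∈ ℂ with |z| < 1 and let p ≥ 1 be a natural number. Then ∫_{0<θ₁<θ₂<⋯<θ_p<2π} ∏_{i=1}^{p} g_z(θ_i) dθ₁⋯dθ_p = 1/p!, where g_z(θ) = (1/(4π))·(e^{iθ}·C(z, e^{iθ}) − e^{−iθ}·D(z, e^{iθ})) and the integral is over the open simplex of ordered p-tuples in (0,2π). (This is the weight integral ∫ ω(z,t₁)⋯ω(z,t_p) over cyclically ordered boundary points, used to evaluate the first Taylor component F₁ of the L∞-morphism of the main theorem: the integral is independent of z and equals its value 1/p! at z = 0, where ω(0,t) = (1/2π) d arg(t).) -/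
/-!
On the boundary circle the propagator is the Poisson kernel: with `u = z̄ e^{iθ}`,
`g_z(θ) = (1 + u/(1-u) + ū/(1-ū)) / 2π`, which has the primitive
`(θ + i log(1-u) - i log(1-ū)) / 2π`. Since `|u| < 1` the logarithms are taken in the slit plane
and are `2π`-periodic, so the primitive gains exactly `1` over a period and `∫₀^{2π} g_z = 1`.
Hence `∏ g_z(θ_i)` integrates to `1` over the cube `(0,2π)^p`. This product is symmetric in the
`θ_i`, and up to the null set where two coordinates coincide the cube is the disjoint union of the
`p!` images of the simplex under coordinate permutations, so the simplex integral is `1/p!`.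
-/

open Complex MeasureTheory

/-- The open simplex of ordered `p`-tuples of angles in `(0, 2π)`. -/
def cyclicSimplex (p : ℕ) : Set (Fin p → ℝ) :=
  {θ | (∀ i, θ i ∈ Set.Ioo (0 : ℝ) (2 * Real.pi)) ∧ ∀ i j : Fin p, i < j → θ i < θ j}

open ComplexConjugate Function

section Symmetrization

variable {p : ℕ}

lemma volume_setOf_apply_eq_apply {i j : Fin p} (hij : i ≠ j) :
    volume {θ : Fin p → ℝ | θ i = θ j} = 0 := by
  let L : (Fin p → ℝ) →ₗ[ℝ] ℝ :=
    (LinearMap.proj i : (Fin p → ℝ) →ₗ[ℝ] ℝ) - LinearMap.proj j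
  have hL : L (Pi.single i 1) ≠ 0 := by simp [L, Pi.single_eq_of_ne hij.symm]
  have hker : (LinearMap.ker L : Set (Fin p → ℝ)) = {θ | θ i = θ j} := by
    ext θ; simp [L, sub_eq_zero]
  rw [← hker]
  exact Measure.addHaar_submodule _ _ fun h => hL (LinearMap.ker_eq_top.mp h ▸ rfl)

lemma ae_injective : ∀ᵐ θ : Fin p → ℝ, Injective θ := by
  have h : ∀ i j : Fin p, ∀ᵐ θ : Fin p → ℝ, θ i = θ j → i = j := by
    intro i j
    rcases eq_or_ne i j with rfl | hij
    · exact .of_forall fun _ _ => rfl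
    · exact measure_mono_null (fun θ (hθ : ¬(θ i = θ j → i = j)) => (Classical.not_imp.1 hθ).1)
        (volume_setOf_apply_eq_apply hij)
  exact (ae_all_iff.2 fun i => ae_all_iff.2 (h i)).mono fun θ hθ i j => hθ i j

lemma measurableSet_setOf_strictMono : MeasurableSet {θ : Fin p → ℝ | StrictMono θ} := by
  simp only [StrictMono, Set.ofPred_forall]
  exact .iInter fun i => .iInter fun j => .iInter fun _ =>
    measurableSet_lt (measurable_pi_apply i) (measurable_pi_apply j)

lemma exists_strictMono_comp_perm {θ : Fin p → ℝ} (hθ : Injective θ) :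
    ∃ σ : Equiv.Perm (Fin p), StrictMono (θ ∘ σ) :=
  ⟨Tuple.sort θ, (Tuple.monotone_sort θ).strictMono_of_injective
    (hθ.comp (Tuple.sort θ).injective)⟩

lemma eq_of_strictMono_comp_perm {θ : Fin p → ℝ} {σ τ : Equiv.Perm (Fin p)}
    (hσ : StrictMono (θ ∘ σ)) (hτ : StrictMono (θ ∘ τ)) : σ = τ := by
  have hrange : Set.range (θ ∘ σ) = Set.range (θ ∘ τ) := by
    rw [Set.range_comp, Set.range_comp, Equiv.range_eq_univ, Equiv.range_eq_univ]
  have hθ : Injective θ := by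
    simpa using hσ.injective.comp σ.symm.injective
  exact Equiv.ext fun i => hθ (congrFun ((hσ.range_inj hτ).mp hrange) i)

variable {E : Type*} [NormedAddCommGroup E] [NormedSpace ℝ E]

lemma setIntegral_strictMono_comp_perm {f : (Fin p → ℝ) → E}
    (hf : ∀ (σ : Equiv.Perm (Fin p)) θ, f (θ ∘ σ) = f θ) (σ : Equiv.Perm (Fin p)) :
    ∫ θ in {θ | StrictMono (θ ∘ σ)}, f θ = ∫ θ in {θ | StrictMono θ}, f θ := by
  let T := MeasurableEquiv.arrowCongr' σ.symm (MeasurableEquiv.refl ℝ)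
  have hT : MeasurePreserving T :=
    volume_preserving_arrowCongr' _ _ (MeasurePreserving.id volume)
  have hTσ : ∀ θ, T θ = θ ∘ σ := fun θ => rfl
  calc ∫ θ in {θ | StrictMono (θ ∘ σ)}, f θ
      = ∫ θ in T ⁻¹' {θ | StrictMono θ}, f (T θ) := by simp only [hTσ, hf]; rfl
    _ = ∫ θ in {θ | StrictMono θ}, f θ := hT.setIntegral_preimage_emb T.measurableEmbedding _ _

theorem integral_eq_factorial_smul_setIntegral_strictMono {f : (Fin p → ℝ) → E}
    (hfi : Integrable f) (hf : ∀ (σ : Equiv.Perm (Fin p)) θ, f (θ ∘ σ) = f θ) :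
    ∫ θ, f θ = p.factorial • ∫ θ in {θ | StrictMono θ}, f θ := by
  let A : Equiv.Perm (Fin p) → Set (Fin p → ℝ) := fun σ => {θ | StrictMono (θ ∘ σ)}
  have hA : ∀ σ, MeasurableSet (A σ) := fun σ =>
    measurableSet_setOf_strictMono.preimage (measurable_pi_lambda _ fun i => measurable_pi_apply _)
  have hcover : (⋃ σ, A σ) =ᵐ[volume] (Set.univ : Set (Fin p → ℝ)) := by
    refine ae_eq_univ.2 (ae_iff.1 ?_)
    exact ae_injective.mono fun θ hθ => Set.mem_iUnion.2 (exists_strictMono_comp_perm hθ)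
  have hdisj : Pairwise (Disjoint on A) := fun σ τ hne =>
    Set.disjoint_left.2 fun _ hσ hτ => hne (eq_of_strictMono_comp_perm hσ hτ)
  calc ∫ θ, f θ = ∫ θ in ⋃ σ, A σ, f θ := by rw [setIntegral_congr_set hcover, setIntegral_univ]
    _ = ∑ σ, ∫ θ in A σ, f θ := integral_iUnion_fintype hA hdisj fun _ => hfi.integrableOn
    _ = p.factorial • ∫ θ in {θ | StrictMono θ}, f θ := by
      simp [A, setIntegral_strictMono_comp_perm hf, Finset.sum_const, Fintype.card_perm]

end Symmetrization

section Circle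

variable {z : ℂ}

lemma mul_propC_sub_inv_mul_propD {w : ℂ} (hz : ‖z‖ < 1) (hw : ‖w‖ = 1) :
    w * propC z w - w⁻¹ * propD z w =
      2 * (1 + conj z * w / (1 - conj z * w) + z * w⁻¹ / (1 - z * w⁻¹)) := by
  have hw0 : w ≠ 0 := norm_ne_zero_iff.1 (hw.symm ▸ one_ne_zero)
  have h1 : 1 - conj z * w ≠ 0 :=
    (isUnit_one_sub_of_norm_lt_one (by rwa [norm_mul, hw, mul_one, norm_conj])).ne_zero
  have h2 : 1 - z * w⁻¹ ≠ 0 :=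
    (isUnit_one_sub_of_norm_lt_one (by rwa [norm_mul, norm_inv, hw, inv_one, mul_one])).ne_zero
  have hC : w * (z - w)⁻¹ = -(1 - z * w⁻¹)⁻¹ := by
    rw [← inv_neg, ← inv_inv w, ← mul_inv, inv_inv]
    congr 1
    field_simp
    ring
  have hD : w⁻¹ * (conj z - w⁻¹)⁻¹ = -(1 - conj z * w)⁻¹ := by
    rw [← inv_neg, ← mul_inv]
    congr 1
    field_simp
    ring
  rw [propC, propD, ← Complex.inv_eq_conj hw, mul_sub w⁻¹, mul_add w, mul_neg, hC, hD,
    ← mul_div_assoc, ← mul_div_assoc, mul_comm w, mul_comm w⁻¹]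
  generalize conj z * w = u at *
  generalize z * w⁻¹ = v at *
  field_simp
  ring

lemma gProp_eq (hz : ‖z‖ < 1) (θ : ℝ) :
    gProp z θ = (2 * Real.pi : ℂ)⁻¹ * (1 + conj z * exp (I * θ) / (1 - conj z * exp (I * θ)) +
      z * exp (-I * θ) / (1 - z * exp (-I * θ))) := by
  rw [gProp, neg_mul, exp_neg, mul_propC_sub_inv_mul_propD hz (norm_exp_I_mul_ofReal θ)]
  ring

lemma hasDerivAt_log_one_sub_mul_exp {a s : ℂ} {θ : ℝ} (h : ‖a * exp (s * θ)‖ < 1) :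
    HasDerivAt (fun t : ℝ => log (1 - a * exp (s * t)))
      (-(s * (a * exp (s * θ))) / (1 - a * exp (s * θ))) θ := by
  have hslit : 1 - a * exp (s * θ) ∈ slitPlane := by
    simpa [sub_eq_add_neg] using mem_slitPlane_of_norm_lt_one (norm_neg (a * exp (s * θ)) ▸ h)
  refine ((((hasDerivAt_id θ).ofReal_comp.const_mul s).cexp.const_mul a).const_sub 1).clog_real
    hslit |>.congr_deriv ?_
  simp only [id, ofReal_one]
  ring

noncomputable def gPropPrimitive (z : ℂ) (θ : ℝ) : ℂ :=
  (2 * Real.pi : ℂ)⁻¹ *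
    (θ + I * log (1 - conj z * exp (I * θ)) - I * log (1 - z * exp (-I * θ)))

lemma norm_conj_mul_exp_I_mul_lt_one (hz : ‖z‖ < 1) (θ : ℝ) : ‖conj z * exp (I * θ)‖ < 1 := by
  rwa [norm_mul, norm_exp_I_mul_ofReal, mul_one, norm_conj]

lemma norm_mul_exp_neg_I_mul_lt_one (hz : ‖z‖ < 1) (θ : ℝ) : ‖z * exp (-I * θ)‖ < 1 := by
  rwa [norm_mul, neg_mul, ← mul_neg, ← ofReal_neg, norm_exp_I_mul_ofReal, mul_one]

lemma hasDerivAt_gPropPrimitive (hz : ‖z‖ < 1) (θ : ℝ) :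
    HasDerivAt (gPropPrimitive z) (gProp z θ) θ := by
  have h1 := norm_conj_mul_exp_I_mul_lt_one hz θ
  have h2 := norm_mul_exp_neg_I_mul_lt_one hz θ
  refine (((hasDerivAt_id θ).ofReal_comp.add ((hasDerivAt_log_one_sub_mul_exp h1).const_mul I)).sub
    ((hasDerivAt_log_one_sub_mul_exp h2).const_mul I)).const_mul (2 * Real.pi : ℂ)⁻¹
    |>.congr_deriv ?_
  rw [gProp_eq hz, ofReal_one]
  linear_combination -(2 * Real.pi : ℂ)⁻¹ * (conj z * exp (I * θ) / (1 - conj z * exp (I * θ)) +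
      z * exp (-I * θ) / (1 - z * exp (-I * θ))) * I_sq

lemma continuous_gProp (hz : ‖z‖ < 1) : Continuous (gProp z) := by
  rw [funext (gProp_eq hz)]
  have h1 : ∀ θ : ℝ, 1 - conj z * exp (I * θ) ≠ 0 := fun θ =>
    (isUnit_one_sub_of_norm_lt_one (norm_conj_mul_exp_I_mul_lt_one hz θ)).ne_zero
  have h2 : ∀ θ : ℝ, 1 - z * exp (-I * θ) ≠ 0 := fun θ =>
    (isUnit_one_sub_of_norm_lt_one (norm_mul_exp_neg_I_mul_lt_one hz θ)).ne_zero
  fun_prop (disch := assumption)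

lemma gPropPrimitive_add_two_pi (z : ℂ) (θ : ℝ) :
    gPropPrimitive z (θ + 2 * Real.pi) = gPropPrimitive z θ + 1 := by
  have hπ : (Real.pi : ℂ) ≠ 0 := ofReal_ne_zero.2 Real.pi_ne_zero
  have hexp (s : ℂ) (hs : exp (s * (2 * Real.pi)) = 1) :
      exp (s * (θ + 2 * Real.pi : ℝ)) = exp (s * θ) := by
    push_cast
    rw [mul_add, exp_add, hs, mul_one]
  rw [gPropPrimitive, gPropPrimitive, hexp I (by rw [mul_comm, exp_two_pi_mul_I]),
    hexp (-I) (by rw [neg_mul, exp_neg, mul_comm, exp_two_pi_mul_I, inv_one])]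
  push_cast
  field_simp
  ring

lemma integral_gProp (hz : ‖z‖ < 1) : ∫ θ in (0)..(2 * Real.pi), gProp z θ = 1 := by
  rw [intervalIntegral.integral_eq_sub_of_hasDerivAt (fun θ _ => hasDerivAt_gPropPrimitive hz θ)
    ((continuous_gProp hz).intervalIntegrable _ _), ← zero_add (2 * Real.pi),
    gPropPrimitive_add_two_pi, add_sub_cancel_left]

end Circle

lemma prod_indicator_apply_eq_indicator_pi {ι α M : Type*} [Fintype ι] [CommMonoidWithZero M]
    (s : Set α) (g : α → M) (θ : ι → α) :
    ∏ i, s.indicator g (θ i) = (Set.univ.pi fun _ => s).indicator (fun θ => ∏ i, g (θ i)) θ := by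
  by_cases h : θ ∈ Set.univ.pi fun _ => s
  · rw [Set.indicator_of_mem h]
    exact Finset.prod_congr rfl fun i _ => Set.indicator_of_mem (h i trivial) _
  · obtain ⟨i, hi⟩ : ∃ i, θ i ∉ s := by simpa using h
    rw [Set.indicator_of_notMem h]
    exact Finset.prod_eq_zero (Finset.mem_univ i) (Set.indicator_of_notMem hi _)

lemma cyclicSimplex_eq_setOf_strictMono_inter_pi (p : ℕ) : cyclicSimplex p =
    {θ | StrictMono θ} ∩ Set.univ.pi fun _ => Set.Ioo 0 (2 * Real.pi) := by
  ext θ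
  simp [cyclicSimplex, StrictMono, and_comm]

theorem propagator_simplex_integral_general (z : ℂ) (hz : ‖z‖ < 1) (p : ℕ) :
    ∫ θ in cyclicSimplex p, (∏ i : Fin p, gProp z (θ i)) =
      (1 : ℂ) / (Nat.factorial p) := by
  set G := (Set.Ioo 0 (2 * Real.pi)).indicator (gProp z)
  have hG : ∫ θ, G θ = 1 := by
    rw [integral_indicator measurableSet_Ioo, ← integral_Ioc_eq_integral_Ioo,
      ← intervalIntegral.integral_of_le Real.two_pi_pos.le, integral_gProp hz]
  have hGi : Integrable G := (integrable_indicator_iff measurableSet_Ioo).2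
    ((continuous_gProp hz).integrableOn_Icc.mono_set Set.Ioo_subset_Icc_self)
  have hsymm : ∀ (σ : Equiv.Perm (Fin p)) θ, ∏ i, G ((θ ∘ σ) i) = ∏ i, G (θ i) :=
    fun σ θ => Equiv.prod_comp σ fun i => G (θ i)
  have hcube : ∫ θ : Fin p → ℝ, ∏ i, G (θ i) = 1 := by
    rw [integral_fintype_prod_volume_eq_pow, hG, one_pow]
  have hsimplex : ∫ θ in {θ : Fin p → ℝ | StrictMono θ}, ∏ i, G (θ i) =
      ∫ θ in cyclicSimplex p, ∏ i, gProp z (θ i) := by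
    simp only [G, prod_indicator_apply_eq_indicator_pi]
    rw [setIntegral_indicator (MeasurableSet.univ_pi fun _ => measurableSet_Ioo),
      cyclicSimplex_eq_setOf_strictMono_inter_pi]
  rw [eq_div_iff (Nat.cast_ne_zero.2 p.factorial_ne_zero), ← hsimplex, ← hcube,
    integral_eq_factorial_smul_setIntegral_strictMono
      (Integrable.fintype_prod (ι := Fin p) fun _ => hGi) hsymm, nsmul_eq_mul, mul_comm]

/-- The weight integral `∫ ω(z,t₁)⋯ω(z,t_p)` over cyclically ordered boundary points
equals `1/p!`, independently of the interior point `z`. -/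
theorem propagator_simplex_integral (z : ℂ) (hz : ‖z‖ < 1) (p : ℕ) (hp : 1 ≤ p) :
    ∫ θ in cyclicSimplex p, (∏ i : Fin p, gProp z (θ i)) =
      (1 : ℂ) / (Nat.factorial p) :=
  propagator_simplex_integral_general z hz p
end
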